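/- For every natural number 𝐧 and every c_* ∈ 𝒬_𝐧, there is exactly one element (r_*, p_*) of the fiber ι̃^{-1}(c_*) ⊆ A_𝐧 for which the number of parts τ_{p_*} of p_* is minimal among all elements of ι̃^{-1}(c_*). -/

import Mathlib

/-- A partition: a nonincreasing list of positive integers (possibly empty). -/
def IsPartition (p : List ℕ) : Prop := p.Pairwise (· ≥ ·) ∧ ∀ x ∈ p, 0 < x

/-- `𝒫̃`: partitions with an even number of parts in which the parts pair up:
`p₁ = p₂, p₃ = p₄, …` (stated 0-indexed). -/
def Ptilde : Set (List ℕ) :=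
  {p | IsPartition p ∧ Even p.length ∧ ∀ i, p.getD (2 * i) 0 = p.getD (2 * i + 1) 0}

/-- `𝒮^κ` for `κ ∈ {0,1}`: partitions with all parts even (and, if `κ = 0`,
an even number of parts). -/
def SK (κ : ℕ) : Set (List ℕ) :=
  {r | IsPartition r ∧ (∀ x ∈ r, x % 2 = 0) ∧ (κ = 0 → Even r.length)}

/-- `𝒮^κ_N`. -/
def SKN (κ N : ℕ) : Set (List ℕ) := {r | r ∈ SK κ ∧ r.sum = N}

/-- `𝒜^κ_{2n} = {(r_*, p_*) ∈ 𝒮^κ × 𝒫̃ : |r_*| + |p_*| = 2n}`. -/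
def AK (κ n : ℕ) : Set (List ℕ × List ℕ) :=
  {rp | rp.1 ∈ SK κ ∧ rp.2 ∈ Ptilde ∧ rp.1.sum + rp.2.sum = 2 * n}

/-- The partition whose multiset of parts is the disjoint union of the multisets of
parts of `r` and `p`: sort `r ++ p` nonincreasingly. -/
def pmerge (r p : List ℕ) : List ℕ := (r ++ p).mergeSort (fun a b => decide (b ≤ a))

/-- `𝒬`: partitions in which every even part has even multiplicity. -/
def Qset : Set (List ℕ) :=
  {c | IsPartition c ∧ ∀ j, j % 2 = 0 → Even (c.count j)}

/-- `𝒬_N`. -/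
def QN (N : ℕ) : Set (List ℕ) := {c | c ∈ Qset ∧ c.sum = N}

/-- The odd parts of `l`, listed in (nonincreasing) order with multiplicity:
`r¹ ≥ r² ≥ … ≥ r^s`. -/
def oddParts (l : List ℕ) : List ℕ := l.filter (fun x => x % 2 = 1)

/-- The set `ℛ` (conditions stated with 1-based indices `u` for the list of odd parts;
`(oddParts l).getD (u-1) 0` is `r^u`). -/
def Rset : Set (List ℕ) :=
  {l | l ∈ Qset ∧
    (l ≠ [] → l.getD 0 0 % 2 = 1) ∧
    (l ≠ [] → Even l.length → l.getD (l.length - 1) 0 % 2 = 1) ∧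
    (∀ u, 1 ≤ u → u + 1 ≤ (oddParts l).length → u % 2 = 1 →
        (oddParts l).getD u 0 < (oddParts l).getD (u - 1) 0) ∧
    (∀ u, 1 ≤ u → u + 1 ≤ (oddParts l).length → u % 2 = 0 →
        ∀ k < l.length,
          ¬((oddParts l).getD u 0 < l.getD k 0 ∧ l.getD k 0 < (oddParts l).getD (u - 1) 0))}

/-- `ℛ_N = ℛ ∩ 𝒬_N`. -/
def RN (N : ℕ) : Set (List ℕ) := {l | l ∈ Rset ∧ l.sum = N}

/-- `A_𝐧 = {(r_*, p_*) ∈ ℛ × 𝒫̃ : |r_*| + |p_*| = 𝐧}`. -/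
def An (m : ℕ) : Set (List ℕ × List ℕ) :=
  {rp | rp.1 ∈ Rset ∧ rp.2 ∈ Ptilde ∧ rp.1.sum + rp.2.sum = m}

/-!
Write `numOddAbove l v` for the number of odd parts of `l` exceeding `v`. On `𝒬`, membership
in `ℛ` is a condition on multiplicities alone: an odd part occurs at most twice, and twice only
if `numOddAbove` at it is odd, while an even part occurs only if `numOddAbove` at it is odd.
The parts of `p ∈ 𝒫̃` come in equal pairs, so for `ι̃ (r, p) = c` the multiplicities and the
numbers `numOddAbove` of `r` and `c` agree mod 2. Hence the multiplicity of `v` in `r` is at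
most a number `maxCount c v` read off `c`, and these bounds are attained simultaneously by one
element `(canonicalR c, canonicalP c)` of the fiber. As `τ_r + τ_p = τ_c`, minimising `τ_p`
maximises `τ_r`, which forces every bound to be attained, i.e. `r = canonicalR c`.
-/

namespace List

section Antitone

variable {L : List ℕ}

theorem getD_mem_of_lt {i : ℕ} (hi : i < L.length) : L.getD i 0 ∈ L := by
  rw [getD_eq_getElem _ _ hi]
  exact getElem_mem hi

theorem Pairwise.getD_le_getD (hs : L.Pairwise (· ≥ ·)) {i j : ℕ} (hij : i ≤ j)
    (hj : j < L.length) : L.getD j 0 ≤ L.getD i 0 := by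
  rw [getD_eq_getElem _ _ hj, getD_eq_getElem _ _ (hij.trans_lt hj)]
  rcases hij.lt_or_eq with h | rfl
  · exact pairwise_iff_getElem.mp hs i j _ _ h
  · rfl

theorem Pairwise.le_getD_zero (hs : L.Pairwise (· ≥ ·)) {y : ℕ} (hy : y ∈ L) :
    y ≤ L.getD 0 0 := by
  obtain ⟨n, hn, rfl⟩ := mem_iff_getElem.mp hy
  rw [← getD_eq_getElem _ 0 hn]
  exact hs.getD_le_getD (Nat.zero_le n) hn

theorem Pairwise.getD_length_sub_one_le (hs : L.Pairwise (· ≥ ·)) {y : ℕ} (hy : y ∈ L) :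
    L.getD (L.length - 1) 0 ≤ y := by
  obtain ⟨n, hn, rfl⟩ := mem_iff_getElem.mp hy
  rw [← getD_eq_getElem _ 0 hn]
  exact hs.getD_le_getD (by omega) (by omega)

theorem Pairwise.getD_iff_lt_countP (hs : L.Pairwise (· ≥ ·)) {p : ℕ → Bool}
    (hp : ∀ ⦃a b⦄, a ≤ b → p a → p b) {i : ℕ} (hi : i < L.length) :
    p (L.getD i 0) ↔ i < L.countP p := by
  induction L generalizing i with
  | nil => simp at hi
  | cons x T ih =>
    rw [pairwise_cons] at hs
    by_cases hx : p x
    · cases i with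
      | zero => simp [hx]
      | succ j => simpa [hx] using ih hs.2 (i := j) (by simpa using hi)
    · have hT : T.countP p = 0 := countP_eq_zero.mpr fun a ha hpa => hx (hp (hs.1 a ha) hpa)
      cases i with
      | zero => simp [hx, hT]
      | succ j =>
        have hj : T.getD j 0 ∈ T := getD_mem_of_lt (by simpa using hi)
        simpa [hx, hT] using fun h => hx (hp (hs.1 _ hj) h)

theorem countP_le_eq_countP_lt_add_count (v : ℕ) (L : List ℕ) :
    L.countP (v ≤ ·) = L.countP (v < ·) + L.count v := by
  induction L with
  | nil => rfl
  | cons x T ih =>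
    simp only [countP_cons, count_cons, ih]
    rcases lt_trichotomy v x with h | rfl | h
    · simp [h, h.le, h.ne']
      omega
    · simp; omega
    · simp [h.not_ge, h.not_gt, h.ne]

theorem Pairwise.getD_eq_iff (hs : L.Pairwise (· ≥ ·)) (v : ℕ) {i : ℕ} (hi : i < L.length) :
    L.getD i 0 = v ↔
      L.countP (v < ·) ≤ i ∧ i < L.countP (v < ·) + L.count v := by
  have hlt := hs.getD_iff_lt_countP (p := (v < ·)) (fun a b hab ha => by simp_all; omega) hi
  have hle := hs.getD_iff_lt_countP (p := (v ≤ ·)) (fun a b hab ha => by simp_all; omega) hi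
  rw [countP_le_eq_countP_lt_add_count] at hle
  simp only [decide_eq_true_eq] at hlt hle
  omega

theorem countP_lt_add_count_le_length (v : ℕ) (L : List ℕ) :
    L.countP (v < ·) + L.count v ≤ L.length :=
  countP_le_eq_countP_lt_add_count v L ▸ countP_le_length

theorem Pairwise.getD_eq_of_mem_block (hs : L.Pairwise (· ≥ ·)) {v j : ℕ}
    (h₁ : L.countP (v < ·) ≤ j) (h₂ : j < L.countP (v < ·) + L.count v) :
    L.getD j 0 = v :=
  (hs.getD_eq_iff v (by have := countP_lt_add_count_le_length v L; omega)).mpr ⟨h₁, h₂⟩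

end Antitone

end List

open List

section Pairing

def IsPaired (p : List ℕ) : Prop :=
  Even p.length ∧ ∀ i, p.getD (2 * i) 0 = p.getD (2 * i + 1) 0

theorem isPaired_cons_cons {a b : ℕ} {t : List ℕ} :
    IsPaired (a :: b :: t) ↔ a = b ∧ IsPaired t := by
  constructor
  · rintro ⟨hlen, hpair⟩
    refine ⟨by simpa using hpair 0, by simpa [parity_simps] using hlen, fun i => ?_⟩
    simpa [Nat.mul_succ] using hpair (i + 1)
  · rintro ⟨rfl, hlen, hpair⟩
    refine ⟨by simpa [parity_simps] using hlen, fun i => ?_⟩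
    cases i with
    | zero => rfl
    | succ j => simpa [Nat.mul_succ] using hpair j

theorem IsPaired.even_countP :
    ∀ {p : List ℕ}, IsPaired p → ∀ q : ℕ → Bool, Even (p.countP q)
  | [], _, _ => by simp
  | [_], h, _ => absurd h.1 (by simp)
  | a :: b :: t, h, q => by
    obtain ⟨rfl, ht⟩ := isPaired_cons_cons.mp h
    have := ht.even_countP q
    by_cases hq : q a <;> simp [hq, this, parity_simps]

theorem isPaired_of_even_count : ∀ {l : List ℕ}, l.Pairwise (· ≥ ·) →
    (∀ v, Even (l.count v)) → IsPaired l
  | [], _, _ => ⟨Even.zero, fun _ => rfl⟩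
  | [a], _, hc => absurd (hc a) (by simp)
  | a :: b :: t, hs, hc => by
    have hab : a = b := by
      by_contra hne
      have hat : a ∉ b :: t := fun hmem => hne <| le_antisymm
        ((pairwise_cons.mp (pairwise_cons.mp hs).2).1 a ((mem_cons.mp hmem).resolve_left hne))
        ((pairwise_cons.mp hs).1 b mem_cons_self)
      simpa [count_cons, count_eq_zero_of_not_mem hat] using hc a
    subst hab
    refine isPaired_cons_cons.mpr
      ⟨rfl, isPaired_of_even_count (hs.sublist (by simp)) fun v => ?_⟩
    by_cases hv : v = a
    · subst hv; simpa [parity_simps] using hc v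
    · simpa [count_cons, Ne.symm hv] using hc v

theorem mem_Ptilde_iff {p : List ℕ} : p ∈ Ptilde ↔ IsPartition p ∧ IsPaired p :=
  Iff.rfl

theorem even_countP_of_mem_Ptilde {p : List ℕ} (hp : p ∈ Ptilde) (q : ℕ → Bool) :
    Even (p.countP q) :=
  (mem_Ptilde_iff.mp hp).2.even_countP q

theorem even_count_of_mem_Ptilde {p : List ℕ} (hp : p ∈ Ptilde) (v : ℕ) : Even (p.count v) :=
  count_eq_countP (a := v) ▸ even_countP_of_mem_Ptilde hp _

theorem mem_Ptilde_of_even_count {p : List ℕ} (hp : IsPartition p) (h : ∀ v, Even (p.count v)) :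
    p ∈ Ptilde :=
  mem_Ptilde_iff.mpr ⟨hp, isPaired_of_even_count hp.1 h⟩

theorem even_countP_of_even_count {L : List ℕ} {q : ℕ → Bool}
    (h : ∀ v, q v → Even (L.count v)) : Even (L.countP q) := by
  have hsum := Multiset.toFinset_sum_count_eq (L.filter q : Multiset ℕ)
  rw [Multiset.coe_card, ← countP_eq_length_filter] at hsum
  rw [← hsum]
  refine Finset.even_sum _ fun v hv => ?_
  have hqv : q v := (mem_filter.mp (Multiset.mem_toFinset.mp hv)).2
  rw [Multiset.coe_count, count_filter hqv]
  exact h v hqv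

end Pairing

section Rset

variable {l : List ℕ}

def numOddAbove (l : List ℕ) (v : ℕ) : ℕ := (oddParts l).countP (v < ·)

def RCond (l : List ℕ) : Prop :=
  ∀ v ∈ l, (v % 2 = 1 → l.count v ≤ 2 ∧ (l.count v = 2 → numOddAbove l v % 2 = 1)) ∧
    (v % 2 = 0 → numOddAbove l v % 2 = 1)

theorem oddParts_pairwise (hs : l.Pairwise (· ≥ ·)) : (oddParts l).Pairwise (· ≥ ·) :=
  hs.filter _

theorem mem_oddParts {y : ℕ} : y ∈ oddParts l ↔ y ∈ l ∧ y % 2 = 1 := by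
  simp [oddParts]

theorem count_oddParts {v : ℕ} (hv : v % 2 = 1) : (oddParts l).count v = l.count v :=
  count_filter (by simp [hv])

theorem length_mod_two_of_mem_Qset (hQ : l ∈ Qset) :
    l.length % 2 = (oddParts l).length % 2 := by
  have heven : Even (l.countP fun x => x % 2 = 0) :=
    even_countP_of_even_count fun v hv => hQ.2 v (by simpa using hv)
  have hlen : l.length = l.countP (· % 2 = 1) + l.countP (· % 2 = 0) := by
    rw [length_eq_countP_add_countP (· % 2 = 1)]
    congr 2
    funext a
    rcases Nat.mod_two_eq_zero_or_one a with h | h <;> simp [h]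
  rw [oddParts, ← countP_eq_length_filter]
  rw [Nat.even_iff] at heven
  omega

theorem numOddAbove_lt_iff (hs : l.Pairwise (· ≥ ·)) (v : ℕ) {u : ℕ}
    (hu : u < (oddParts l).length) :
    v < (oddParts l).getD u 0 ↔ u < numOddAbove l v := by
  simpa [numOddAbove] using (oddParts_pairwise hs).getD_iff_lt_countP (p := (v < ·))
    (fun a b hab ha => by simp_all; omega) hu

theorem Rset.false_of_odd_index_in_block (hl : l ∈ Rset) {v u : ℕ} (hv : v % 2 = 1)
    (hu : u % 2 = 1) (h₁ : numOddAbove l v < u) (h₂ : u < numOddAbove l v + l.count v) :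
    False := by
  have hO := oddParts_pairwise hl.1.1.1
  have ha : numOddAbove l v = (oddParts l).countP (v < ·) := rfl
  rw [← count_oddParts hv, ha] at h₂
  rw [ha] at h₁
  have hlen := countP_lt_add_count_le_length v (oddParts l)
  have e₁ : (oddParts l).getD u 0 = v := hO.getD_eq_of_mem_block h₁.le h₂
  have e₂ : (oddParts l).getD (u - 1) 0 = v := hO.getD_eq_of_mem_block (by omega) (by omega)
  have := hl.2.2.2.1 u (by omega) (by omega) hu
  omega

theorem Rset.count_le_two (hl : l ∈ Rset) {v : ℕ} (hv : v % 2 = 1) : l.count v ≤ 2 := by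
  by_contra! h
  rcases Nat.even_or_odd (numOddAbove l v) with ⟨k, hk⟩ | ⟨k, hk⟩
  · exact Rset.false_of_odd_index_in_block hl hv (u := numOddAbove l v + 1)
      (by omega) (by omega) (by omega)
  · exact Rset.false_of_odd_index_in_block hl hv (u := numOddAbove l v + 2)
      (by omega) (by omega) (by omega)

theorem Rset.numOddAbove_odd_of_count_eq_two (hl : l ∈ Rset) {v : ℕ} (hv : v % 2 = 1)
    (h₂ : l.count v = 2) : numOddAbove l v % 2 = 1 := by
  by_contra h
  exact Rset.false_of_odd_index_in_block hl hv (u := numOddAbove l v + 1)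
    (by omega) (by omega) (by omega)

theorem Rset.numOddAbove_pos (hl : l ∈ Rset) {v : ℕ} (hv : v ∈ l) (heven : v % 2 = 0) :
    0 < numOddAbove l v := by
  have hne : l ≠ [] := ne_nil_of_mem hv
  have hhead : l.getD 0 0 ∈ oddParts l :=
    mem_oddParts.mpr ⟨getD_mem_of_lt (length_pos_iff.mpr hne), hl.2.1 hne⟩
  have hvle : v ≤ l.getD 0 0 := hl.1.1.1.le_getD_zero hv
  have hodd := hl.2.1 hne
  exact countP_pos_iff.mpr ⟨_, hhead, by simp only [decide_eq_true_eq]; omega⟩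

/-- If every odd part exceeded the even part `v`, the last part would be even and, by
condition (ii), the number of parts odd. -/
theorem Rset.numOddAbove_odd_of_eq_length (hl : l ∈ Rset) {v : ℕ} (hv : v ∈ l)
    (heven : v % 2 = 0) (hall : numOddAbove l v = (oddParts l).length) :
    numOddAbove l v % 2 = 1 := by
  by_contra hpar
  have hne : l ≠ [] := ne_nil_of_mem hv
  have hlen : Even l.length := by
    rw [Nat.even_iff, length_mod_two_of_mem_Qset hl.1, ← hall]
    omega
  have hlast : l.getD (l.length - 1) 0 ∈ oddParts l :=
    mem_oddParts.mpr ⟨getD_mem_of_lt (by simp [length_pos_iff.mpr hne]), hl.2.2.1 hne hlen⟩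
  have hgt : v < l.getD (l.length - 1) 0 := by
    simpa using countP_eq_length.mp hall _ hlast
  have := hl.1.1.1.getD_length_sub_one_le hv
  omega

theorem Rset.numOddAbove_odd_of_even (hl : l ∈ Rset) {v : ℕ} (hv : v ∈ l)
    (heven : v % 2 = 0) : numOddAbove l v % 2 = 1 := by
  have hpos := Rset.numOddAbove_pos hl hv heven
  by_cases hall : numOddAbove l v = (oddParts l).length
  · exact Rset.numOddAbove_odd_of_eq_length hl hv heven hall
  have hlt : numOddAbove l v < (oddParts l).length := countP_le_length.lt_of_ne hall
  by_contra hpar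
  set a := numOddAbove l v
  have hbelow : (oddParts l).getD a 0 < v := by
    have : (oddParts l).getD a 0 ≠ v := fun h =>
      absurd ((mem_oddParts.mp (h ▸ getD_mem_of_lt hlt)).2) (by omega)
    have := (numOddAbove_lt_iff hl.1.1.1 v hlt).not.mpr (lt_irrefl a)
    omega
  have habove : v < (oddParts l).getD (a - 1) 0 :=
    (numOddAbove_lt_iff hl.1.1.1 v (by omega)).mpr (by omega)
  obtain ⟨k, hk, rfl⟩ := mem_iff_getElem.mp hv
  exact hl.2.2.2.2 a hpos (by omega) (by omega) k hk
    (by rw [getD_eq_getElem _ _ hk]; exact ⟨hbelow, habove⟩)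

theorem Rset.rCond (hl : l ∈ Rset) : RCond l := fun _ hv =>
  ⟨fun hodd => ⟨Rset.count_le_two hl hodd, Rset.numOddAbove_odd_of_count_eq_two hl hodd⟩,
    Rset.numOddAbove_odd_of_even hl hv⟩

theorem RCond.head_odd (hc : RCond l) (hQ : l ∈ Qset) (hne : l ≠ []) : l.getD 0 0 % 2 = 1 := by
  by_contra hpar
  have hmem : l.getD 0 0 ∈ l := getD_mem_of_lt (length_pos_iff.mpr hne)
  have hodd := (hc _ hmem).2 (by omega)
  obtain ⟨y, hy, hgt⟩ := countP_pos_iff.mp (show 0 < numOddAbove l (l.getD 0 0) by omega)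
  have := hQ.1.1.le_getD_zero (mem_oddParts.mp hy).1
  simp only [decide_eq_true_eq] at hgt
  omega

theorem RCond.last_odd (hc : RCond l) (hQ : l ∈ Qset) (hne : l ≠ []) (hlen : Even l.length) :
    l.getD (l.length - 1) 0 % 2 = 1 := by
  by_contra hpar
  have hmem : l.getD (l.length - 1) 0 ∈ l :=
    getD_mem_of_lt (by simp [length_pos_iff.mpr hne])
  have hall : numOddAbove l (l.getD (l.length - 1) 0) = (oddParts l).length := by
    refine countP_eq_length.mpr fun y hy => ?_
    obtain ⟨hyl, hyodd⟩ := mem_oddParts.mp hy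
    have := hQ.1.1.getD_length_sub_one_le hyl
    simp only [decide_eq_true_eq]
    omega
  have := (hc _ hmem).2 (by omega)
  have := length_mod_two_of_mem_Qset hQ
  rw [Nat.even_iff] at hlen
  omega

theorem RCond.getD_oddParts_lt (hc : RCond l) (hQ : l ∈ Qset) {u : ℕ} (hu₀ : 1 ≤ u)
    (hu : u + 1 ≤ (oddParts l).length) (hodd : u % 2 = 1) :
    (oddParts l).getD u 0 < (oddParts l).getD (u - 1) 0 := by
  have hO := oddParts_pairwise hQ.1.1
  refine (hO.getD_le_getD (Nat.sub_le u 1) (by omega)).lt_of_ne fun heq => ?_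
  obtain ⟨v, hv⟩ : ∃ v, (oddParts l).getD u 0 = v := ⟨_, rfl⟩
  obtain ⟨hvl, hvodd⟩ := mem_oddParts.mp (hv ▸ getD_mem_of_lt (by omega) : v ∈ oddParts l)
  have e₁ := (hO.getD_eq_iff v (i := u) (by omega)).mp hv
  have e₂ := (hO.getD_eq_iff v (i := u - 1) (by omega)).mp (heq ▸ hv)
  have ha : (oddParts l).countP (v < ·) = numOddAbove l v := rfl
  rw [count_oddParts hvodd, ha] at e₁ e₂
  have h₂ := (hc v hvl).1 hvodd
  have := h₂.2 (by omega)
  omega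

theorem RCond.no_part_between (hc : RCond l) (hQ : l ∈ Qset) {u : ℕ} (hu₀ : 1 ≤ u)
    (hu : u + 1 ≤ (oddParts l).length) (heven : u % 2 = 0) {k : ℕ} (hk : k < l.length) :
    ¬((oddParts l).getD u 0 < l.getD k 0 ∧ l.getD k 0 < (oddParts l).getD (u - 1) 0) := by
  rintro ⟨hbelow, habove⟩
  set w := l.getD k 0
  have hw : w ∈ l := getD_mem_of_lt hk
  have hup : u - 1 < numOddAbove l w :=
    (numOddAbove_lt_iff hQ.1.1 w (by omega)).mp habove
  have hdn : numOddAbove l w ≤ u :=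
    not_lt.mp fun h => by have := (numOddAbove_lt_iff hQ.1.1 w (by omega)).mpr h; omega
  by_cases hwodd : w % 2 = 1
  · have hcount : 0 < (oddParts l).count w :=
      count_pos_iff.mpr (mem_oddParts.mpr ⟨hw, hwodd⟩)
    have := (oddParts_pairwise hQ.1.1).getD_eq_of_mem_block (v := w) (j := u)
      (show numOddAbove l w ≤ u from hdn) (show u < numOddAbove l w + _ by omega)
    omega
  · have := (hc w hw).2 (by omega)
    omega

theorem mem_Rset_iff : l ∈ Rset ↔ l ∈ Qset ∧ RCond l :=
  ⟨fun hl => ⟨hl.1, Rset.rCond hl⟩, fun ⟨hQ, hc⟩ =>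
    ⟨hQ, hc.head_odd hQ, hc.last_odd hQ,
      fun _ hu₀ hu hodd => hc.getD_oddParts_lt hQ hu₀ hu hodd,
      fun _ hu₀ hu heven _ hk => hc.no_part_between hQ hu₀ hu heven hk⟩⟩

end Rset

theorem pmerge_perm (r p : List ℕ) : pmerge r p ~ r ++ p :=
  mergeSort_perm _ _

theorem pmerge_eq_of_perm {r p c : List ℕ} (h : r ++ p ~ c) (hc : c.Pairwise (· ≥ ·)) :
    pmerge r p = c := by
  refine Perm.eq_of_pairwise' ?_ hc ((pmerge_perm r p).trans h)
  exact (pairwise_mergeSort (fun a b c h₁ h₂ => by simp_all; omega) (fun a b => by simp; omega)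
    (r ++ p)).imp (by simp)

theorem count_of_pmerge_eq {r p c : List ℕ} (h : pmerge r p = c) (v : ℕ) :
    c.count v = r.count v + p.count v := by
  rw [← h, (pmerge_perm r p).count_eq, count_append]

theorem length_add_length_of_pmerge_eq {r p c : List ℕ} (h : pmerge r p = c) :
    r.length + p.length = c.length := by
  rw [← length_append, ← h, (pmerge_perm r p).length_eq]

theorem numOddAbove_mod_two_of_pmerge_eq {r p c : List ℕ} (h : pmerge r p = c)
    (hp : p ∈ Ptilde) (v : ℕ) : numOddAbove r v % 2 = numOddAbove c v % 2 := by
  have hperm : oddParts c ~ oddParts r ++ oddParts p := by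
    rw [oddParts, oddParts, oddParts, ← filter_append, ← h]
    exact (pmerge_perm r p).filter _
  have heven := even_countP_of_mem_Ptilde hp (fun y => decide (v < y) && decide (y % 2 = 1))
  rw [← countP_filter, Nat.even_iff] at heven
  simp only [numOddAbove, hperm.countP_eq, countP_append]
  unfold oddParts
  omega

section Canonical

variable {c : List ℕ}

def maxCount (c : List ℕ) (v : ℕ) : ℕ :=
  if v % 2 = 1 then
    if c.count v % 2 = 1 then 1
    else if numOddAbove c v % 2 = 1 ∧ 2 ≤ c.count v then 2 else 0
  else if numOddAbove c v % 2 = 1 then c.count v else 0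

theorem maxCount_le_count (c : List ℕ) (v : ℕ) : maxCount c v ≤ c.count v := by
  unfold maxCount
  split_ifs <;> omega

theorem maxCount_mod_two (hQ : c ∈ Qset) (v : ℕ) : maxCount c v % 2 = c.count v % 2 := by
  have heven : v % 2 = 0 → c.count v % 2 = 0 := fun hv => Nat.even_iff.mp (hQ.2 v hv)
  unfold maxCount
  split_ifs <;> omega

theorem count_le_maxCount {r p : List ℕ} (hr : r ∈ Rset) (hp : p ∈ Ptilde)
    (h : pmerge r p = c) (v : ℕ) : r.count v ≤ maxCount c v := by
  rcases Nat.eq_zero_or_pos (r.count v) with h0 | hpos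
  · omega
  have hcount := count_of_pmerge_eq h v
  have hpeven := Nat.even_iff.mp (even_count_of_mem_Ptilde hp v)
  have hpar := numOddAbove_mod_two_of_pmerge_eq h hp v
  obtain ⟨hodd, heven⟩ := Rset.rCond hr v (count_pos_iff.mp hpos)
  unfold maxCount
  rcases Nat.mod_two_eq_zero_or_one v with hv | hv
  · have := heven hv
    split_ifs <;> omega
  · obtain ⟨hle, htwo⟩ := hodd hv
    by_cases h2 : r.count v = 2
    · have := htwo h2
      split_ifs <;> omega
    · split_ifs <;> omega

theorem maxCount_ne_zero_mem {v : ℕ} (hv : maxCount c v ≠ 0) : v ∈ c.toFinset :=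
  mem_toFinset.mpr (count_pos_iff.mp (by have := maxCount_le_count c v; omega))

noncomputable def canonicalR (c : List ℕ) : List ℕ :=
  (Finsupp.onFinset c.toFinset (maxCount c) fun _ => maxCount_ne_zero_mem).toMultiset.sort
    (· ≥ ·)

noncomputable def canonicalP (c : List ℕ) : List ℕ := c.diff (canonicalR c)

theorem count_canonicalR (c : List ℕ) (v : ℕ) : (canonicalR c).count v = maxCount c v := by
  rw [canonicalR, ← Multiset.coe_count, Multiset.sort_eq, Finsupp.count_toMultiset,
    Finsupp.onFinset_apply]

theorem count_canonicalP (c : List ℕ) (v : ℕ) :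
    (canonicalP c).count v = c.count v - maxCount c v := by
  rw [canonicalP, count_diff, count_canonicalR]

theorem canonicalR_append_canonicalP_perm (c : List ℕ) : canonicalR c ++ canonicalP c ~ c := by
  refine perm_iff_count.mpr fun v => ?_
  rw [count_append, count_canonicalR, count_canonicalP]
  have := maxCount_le_count c v
  omega

theorem mem_of_mem_canonicalR {v : ℕ} (hv : v ∈ canonicalR c) : v ∈ c := by
  rw [← count_pos_iff, count_canonicalR] at hv
  exact count_pos_iff.mp (hv.trans_le (maxCount_le_count c v))

theorem pmerge_canonical (hs : c.Pairwise (· ≥ ·)) : pmerge (canonicalR c) (canonicalP c) = c :=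
  pmerge_eq_of_perm (canonicalR_append_canonicalP_perm c) hs

theorem canonicalP_mem_Ptilde (hQ : c ∈ Qset) : canonicalP c ∈ Ptilde := by
  have hsub : canonicalP c <+ c := diff_sublist _ _
  refine mem_Ptilde_of_even_count ⟨hQ.1.1.sublist hsub, fun x hx => hQ.1.2 x (hsub.subset hx)⟩
    fun v => ?_
  rw [count_canonicalP, Nat.even_iff]
  have := maxCount_mod_two hQ v
  have := maxCount_le_count c v
  omega

theorem canonicalR_mem_Qset (hQ : c ∈ Qset) : canonicalR c ∈ Qset := by
  refine ⟨⟨Multiset.pairwise_sort _ _, fun x hx => hQ.1.2 x (mem_of_mem_canonicalR hx)⟩,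
    fun j hj => ?_⟩
  rw [count_canonicalR, maxCount, if_neg (by omega)]
  split_ifs
  exacts [hQ.2 j hj, Even.zero]

theorem canonicalR_mem_Rset (hQ : c ∈ Qset) : canonicalR c ∈ Rset := by
  refine mem_Rset_iff.mpr ⟨canonicalR_mem_Qset hQ, fun v hv => ?_⟩
  have hpos := count_pos_iff.mpr hv
  have hpar := numOddAbove_mod_two_of_pmerge_eq (pmerge_canonical hQ.1.1)
    (canonicalP_mem_Ptilde hQ) v
  rw [count_canonicalR, maxCount] at hpos ⊢
  constructor
  · intro hodd
    simp only [if_pos hodd] at hpos ⊢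
    split_ifs at hpos ⊢ <;> omega
  · intro heven
    simp only [if_neg (show ¬v % 2 = 1 by omega)] at hpos ⊢
    split_ifs at hpos <;> omega

theorem canonical_mem_fiber {m : ℕ} (hc : c ∈ QN m) :
    (canonicalR c, canonicalP c) ∈ An m ∧ pmerge (canonicalR c) (canonicalP c) = c := by
  refine ⟨⟨canonicalR_mem_Rset hc.1, canonicalP_mem_Ptilde hc.1, ?_⟩,
    pmerge_canonical hc.1.1.1⟩
  rw [← sum_append, (canonicalR_append_canonicalP_perm c).sum_eq, hc.2]

theorem subperm_canonicalR {r p : List ℕ} (hr : r ∈ Rset) (hp : p ∈ Ptilde)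
    (h : pmerge r p = c) : r <+~ canonicalR c :=
  subperm_iff_count.mpr fun v => count_canonicalR c v ▸ count_le_maxCount hr hp h v

theorem length_canonicalP_le {r p : List ℕ} (hr : r ∈ Rset) (hp : p ∈ Ptilde)
    (h : pmerge r p = c) (hs : c.Pairwise (· ≥ ·)) : (canonicalP c).length ≤ p.length := by
  have := (subperm_canonicalR hr hp h).length_le
  have := length_add_length_of_pmerge_eq h
  have := length_add_length_of_pmerge_eq (pmerge_canonical hs)
  omega

theorem eq_canonical_of_length_le {r p : List ℕ} (hr : r ∈ Rset) (hp : p ∈ Ptilde)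
    (h : pmerge r p = c) (hs : c.Pairwise (· ≥ ·)) (hlen : p.length ≤ (canonicalP c).length) :
    (r, p) = (canonicalR c, canonicalP c) := by
  have hr : r = canonicalR c := by
    refine Perm.eq_of_pairwise' hr.1.1.1 (Multiset.pairwise_sort _ _)
      ((subperm_canonicalR hr hp h).perm_of_length_le ?_)
    have := length_add_length_of_pmerge_eq h
    have := length_add_length_of_pmerge_eq (pmerge_canonical hs)
    omega
  subst hr
  have hperm : canonicalR c ++ p ~ canonicalR c ++ canonicalP c := by
    have := pmerge_perm (canonicalR c) p
    rw [h] at this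
    exact this.symm.trans (canonicalR_append_canonicalP_perm c).symm
  rw [Prod.mk.injEq]
  exact ⟨rfl, Perm.eq_of_pairwise' hp.1.1 (hs.sublist (diff_sublist _ _))
    ((perm_append_left_iff _).mp hperm)⟩

end Canonical

/-- for every `𝐧` and every `c ∈ 𝒬_𝐧`, there is exactly one element
`(r,p)` of the fiber `ι̃⁻¹(c) ⊆ A_𝐧` for which the number of parts of `p` is minimal
among all elements of the fiber. -/
theorem stmt6 (m : ℕ) (c : List ℕ) (hc : c ∈ QN m) :
    ∃! rp : List ℕ × List ℕ,
      (rp ∈ An m ∧ pmerge rp.1 rp.2 = c) ∧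
      ∀ rp' : List ℕ × List ℕ, (rp' ∈ An m ∧ pmerge rp'.1 rp'.2 = c) →
        rp.2.length ≤ rp'.2.length := by
  have hs : c.Pairwise (· ≥ ·) := hc.1.1.1
  refine ⟨(canonicalR c, canonicalP c), ⟨canonical_mem_fiber hc, ?_⟩, ?_⟩
  · rintro ⟨r, p⟩ ⟨⟨hr, hp, -⟩, h⟩
    exact length_canonicalP_le hr hp h hs
  · rintro ⟨r, p⟩ ⟨⟨⟨hr, hp, -⟩, h⟩, hmin⟩
    exact eq_canonical_of_length_le hr hp h hs (hmin _ (canonical_mem_fiber hc))
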